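/- Let p be a prime and let (A, ν) be a commutative ring with pA = 0 and a proper pseudovaluation. An overconvergent Witt vector α ∈ W†(A) is a unit of W†(A) — that is, α has an inverse in W(A) which is again overconvergent — if and only if its zeroth Witt component w₀(α) = a₀ is a unit in A. -/

import Mathlib

open scoped Classical

noncomputable section

/-- A pseudovaluation on a commutative ring `A`: a function `ν : A → ℝ ∪ {±∞}` with
`ν 0 = ∞`, `ν 1 = 0`, `ν (a - b) ≥ min (ν a) (ν b)`, and `ν (a*b) ≥ ν a + ν b`
whenever `ν a ≠ -∞` and `ν b ≠ -∞`. -/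
structure IsPseudovaluation {A : Type*} [CommRing A] (ν : A → EReal) : Prop where
  map_zero : ν 0 = ⊤
  map_one : ν 1 = 0
  min_le_sub : ∀ a b : A, min (ν a) (ν b) ≤ ν (a - b)
  add_le_mul : ∀ a b : A, ν a ≠ ⊥ → ν b ≠ ⊥ → ν a + ν b ≤ ν (a * b)

/-- A proper pseudovaluation never takes the value `-∞`. -/
def IsProperPV {A : Type*} [CommRing A] (ν : A → EReal) : Prop :=
  IsPseudovaluation ν ∧ ∀ a : A, ν a ≠ ⊥

/-- A negative pseudovaluation is proper and satisfies `ν a ≤ 0` for `a ≠ 0`. -/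
def IsNegativePV {A : Type*} [CommRing A] (ν : A → EReal) : Prop :=
  IsPseudovaluation ν ∧ (∀ a : A, ν a ≠ ⊥) ∧ ∀ a : A, a ≠ 0 → ν a ≤ 0

/-- `f` is localizing with respect to `ν` if there are `C > 0`, `D ≥ 0` with
`ν (fⁿ x) ≤ C · ν x + n D` for all `n` and `x`. -/
def IsLocalizing {A : Type*} [CommRing A] (ν : A → EReal) (f : A) : Prop :=
  ∃ C D : ℝ, 0 < C ∧ 0 ≤ D ∧ ∀ (n : ℕ) (x : A),
    ν (f ^ n * x) ≤ (C : EReal) * ν x + (((n : ℝ) * D : ℝ) : EReal)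

/-- Two functions `A → ℝ ∪ {±∞}` are linearly equivalent if they dominate each other
up to positive multiplicative and nonnegative additive constants. -/
def LinearlyEquivalent {A : Type*} (ν₁ ν₂ : A → EReal) : Prop :=
  ∃ c₁ c₂ d₁ d₂ : ℝ, 0 < c₁ ∧ 0 < c₂ ∧ 0 ≤ d₁ ∧ 0 ≤ d₂ ∧
    (∀ a : A, (c₂ : EReal) * ν₂ a - (d₂ : EReal) ≤ ν₁ a) ∧
    (∀ a : A, (c₁ : EReal) * ν₁ a - (d₁ : EReal) ≤ ν₂ a)

/-- The weighted degree pseudovaluation on a multivariate polynomial ring: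
`ν (Σ_k c_k T^k) = inf_k { μ(c_k) - Σ_i k_i d_i }`. -/
def weightedDegPV {R : Type*} [CommRing R] (μ : R → EReal) {m : ℕ} (d : Fin m → ℝ)
    (f : MvPolynomial (Fin m) R) : EReal :=
  ⨅ k : Fin m →₀ ℕ, (μ (MvPolynomial.coeff k f) - ((∑ i, (k i : ℝ) * d i : ℝ) : EReal))

/-- A pseudovaluation `τ` on an `R`-algebra `B` is admissible (relative to `μ` on `R`)
if it is the quotient of a weighted degree pseudovaluation under some surjection
from a polynomial ring. -/
def IsAdmissiblePV {R B : Type*} [CommRing R] [CommRing B] [Algebra R B]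
    (μ : R → EReal) (τ : B → EReal) : Prop :=
  ∃ (m : ℕ) (π : MvPolynomial (Fin m) R →ₐ[R] B) (d : Fin m → ℝ),
    Function.Surjective π ∧ (∀ i, 0 < d i) ∧
    ∀ b : B, τ b = ⨆ (f : MvPolynomial (Fin m) R) (_ : π f = b), weightedDegPV μ d f

/-- The pseudovaluation `μ (Σ_i a_i X^i) = min_i { ν(a_i) - i·d }` on `A[X]`. -/
def polyPV {A : Type*} [CommRing A] (ν : A → EReal) (d : ℝ) (g : Polynomial A) : EReal :=
  ⨅ i : ℕ, (ν (g.coeff i) - (((i : ℝ) * d : ℝ) : EReal))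

/-- The induced pseudovaluation on the localization `A_f`: the quotient of `polyPV ν d`
under the map `A[X] → A_f`, `X ↦ f⁻¹`. -/
def locPV {A : Type*} [CommRing A] (ν : A → EReal) (f : A) (d : ℝ)
    (z : Localization.Away f) : EReal :=
  ⨆ (g : Polynomial A)
    (_ : Polynomial.aeval (IsLocalization.Away.invSelf (S := Localization.Away f) f) g = z),
    polyPV ν d g

/-- The Gauss norm `γ_ε(α) = inf_i { i + ε p^{-i} ν(a_i) }` of a Witt vector. -/
def gaussNorm (p : ℕ) {A : Type*} [CommRing A] (ν : A → EReal) (ε : ℝ)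
    (α : WittVector p A) : EReal :=
  ⨅ i : ℕ, ((i : EReal) + ((ε * (p : ℝ) ^ (-(i : ℤ)) : ℝ) : EReal) * ν (α.coeff i))

/-- A Witt vector is overconvergent if `γ_ε(α) ≠ -∞` for some `ε > 0`. -/
def IsOverconvergent (p : ℕ) {A : Type*} [CommRing A] (ν : A → EReal)
    (α : WittVector p A) : Prop :=
  ∃ ε : ℝ, 0 < ε ∧ gaussNorm p ν ε α ≠ ⊥

/-- The trivial valuation on an integral domain: `ν 0 = ∞` and `ν a = 0` for `a ≠ 0`. -/
def trivialPV (K : Type*) [Zero K] : K → EReal :=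
  fun a => if a = 0 then (⊤ : EReal) else 0

/-! For `ε > 0` and `C ≥ 0` consider the ball `γ_ε(x) ≥ -C`, i.e. `ν(x_n) ≥ -(C + n) p^n / ε`
for all `n`. Giving the `k`-th coefficient weight `p^k`, the Witt addition and subtraction
polynomials are isobaric of weight `p^n`, so each ball is closed under `+` and `-`. Expanding
`x ≡ ∑_{i ≤ n} V^i [x_i]` modulo `V^(n+1)` and using `V^i [a] V^j [b] = V^(i+j) [a^(p^j) b^(p^i)]`
(valid as `pA = 0`) shows `γ_ε(xy) ≥ γ_ε(x) + γ_ε(y)`.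

If `a₀` has inverse `u`, then `x = [u] α` has `x₀ = 1`, and after shrinking `ε` it lies in the
ball with `C = 0`, which is closed under products. Its inverse is the geometric series
`∑ (1 - x)^k`: since `(1 - x)^k ∈ V^k W(A)`, the `n`-th coefficient of the inverse is that of the
`n`-th partial sum, which lies in the ball. Then `α⁻¹ = [u] x⁻¹` is overconvergent. Conversely,
`α β = 1` gives `a₀ b₀ = 1`.
-/

open WittVector MvPolynomial Finset

namespace IsPseudovaluation

variable {A : Type*} [CommRing A] {ν : A → EReal}

section

variable (hν : IsPseudovaluation ν)
include hν

lemma le_neg (a : A) : ν a ≤ ν (-a) := by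
  simpa [hν.map_zero] using hν.min_le_sub 0 a

lemma min_le_add (a b : A) : min (ν a) (ν b) ≤ ν (a + b) := by
  simpa using (min_le_min_left _ (hν.le_neg b)).trans (hν.min_le_sub a (-b))

lemma le_sum {ι : Type*} (s : Finset ι) (f : ι → A) {B : EReal} (h : ∀ i ∈ s, B ≤ ν (f i)) :
    B ≤ ν (∑ i ∈ s, f i) := by
  induction s using Finset.induction_on with
  | empty => simp [hν.map_zero]
  | insert a s ha ih =>
    rw [Finset.sum_insert ha]
    exact (le_min (h a (mem_insert_self a s)) (ih fun i hi => h i (mem_insert_of_mem hi))).trans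
      (hν.min_le_add _ _)

lemma natCast_nonneg (n : ℕ) : 0 ≤ ν n := by
  induction n with
  | zero => simp [hν.map_zero]
  | succ n ih =>
    push_cast
    exact (le_min ih hν.map_one.ge).trans (hν.min_le_add _ _)

lemma intCast_nonneg (k : ℤ) : 0 ≤ ν k := by
  obtain ⟨n, rfl | rfl⟩ := Int.eq_nat_or_neg k
  · exact_mod_cast hν.natCast_nonneg n
  · push_cast
    exact (hν.natCast_nonneg n).trans (hν.le_neg _)

end

variable (hν : IsPseudovaluation ν) (hproper : ∀ a : A, ν a ≠ ⊥)
include hν hproper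

lemma add_le_mul_of_le {a b : A} {B B' : EReal} (ha : B ≤ ν a) (hb : B' ≤ ν b) :
    B + B' ≤ ν (a * b) :=
  (add_le_add ha hb).trans (hν.add_le_mul a b (hproper a) (hproper b))

lemma le_intCast_mul (c : ℤ) {a : A} {B : EReal} (ha : B ≤ ν a) : B ≤ ν (c * a) := by
  simpa using hν.add_le_mul_of_le hproper (hν.intCast_nonneg c) ha

lemma nsmul_le_pow {a : A} {b : ℝ} (ha : (b : EReal) ≤ ν a) (k : ℕ) :
    ((k * b : ℝ) : EReal) ≤ ν (a ^ k) := by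
  induction k with
  | zero => simp [hν.map_one]
  | succ k ih =>
    rw [pow_succ, Nat.cast_succ, add_mul, one_mul, EReal.coe_add]
    exact hν.add_le_mul_of_le hproper ih ha

lemma sum_le_prod_pow {ι : Type*} (s : Finset ι) (a : ι → A) (b : ι → ℝ)
    (hab : ∀ i ∈ s, (b i : EReal) ≤ ν (a i)) (k : ι → ℕ) :
    ((∑ i ∈ s, k i * b i : ℝ) : EReal) ≤ ν (∏ i ∈ s, a i ^ k i) := by
  induction s using Finset.induction_on with
  | empty => simp [hν.map_one]
  | insert j s hj ih =>
    rw [Finset.prod_insert hj, Finset.sum_insert hj, EReal.coe_add]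
    exact hν.add_le_mul_of_le hproper (hν.nsmul_le_pow hproper (hab j (mem_insert_self j s)) _)
      (ih fun i hi => hab i (mem_insert_of_mem hi))

end IsPseudovaluation

lemma EReal.coe_natCast_add_mul_le_iff {c t : ℝ} (hc : 0 < c) (i : ℕ) {y : EReal} :
    ((i + c * t : ℝ) : EReal) ≤ i + c * y ↔ (t : EReal) ≤ y := by
  induction y using EReal.rec with
  | bot => simp only [coe_mul_bot_of_pos hc, add_bot, le_bot_iff, coe_ne_bot]
  | coe y =>
    norm_cast
    constructor <;> intro h <;> nlinarith
  | top => simp only [coe_mul_top_of_pos hc, add_top_of_ne_bot (natCast_ne_bot i), le_top]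

namespace WittVector

section Isobaric

variable (p : ℕ)

/-- The weight making the Witt polynomials isobaric: the variable `(i, k)`, standing for the
`k`-th coefficient of the `i`-th Witt vector, has weight `p ^ k`. -/
def levelWeight {ι : Type*} (v : ι × ℕ) : ℕ := p ^ v.2

lemma isWeightedHomogeneous_rename_wittPolynomial {ι : Type*} (i : ι) (n : ℕ) :
    IsWeightedHomogeneous (levelWeight p) (rename (Prod.mk i) (wittPolynomial p ℤ n)) (p ^ n) := by
  rw [wittPolynomial_eq_sum_C_mul_X_pow, map_sum]
  refine IsWeightedHomogeneous.sum _ _ _ fun k hk => ?_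
  simp only [map_mul, map_pow, rename_C, rename_X]
  rw [← C_pow]
  refine IsWeightedHomogeneous.C_mul ?_ _
  have := (isWeightedHomogeneous_X ℤ (levelWeight p) (i, k)).pow (p ^ (n - k))
  rwa [levelWeight, smul_eq_mul, ← pow_add,
    Nat.sub_add_cancel (Nat.lt_succ_iff.mp (mem_range.mp hk))] at this

variable [Fact p.Prime]

lemma isWeightedHomogeneous_wittStructureInt {ι : Type*} (Φ : MvPolynomial ι ℤ)
    (hΦ : ∀ n, IsWeightedHomogeneous (levelWeight p)
      (bind₁ (fun i => rename (Prod.mk i) (wittPolynomial p ℤ n)) Φ) (p ^ n))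
    (n : ℕ) : IsWeightedHomogeneous (levelWeight p) (wittStructureInt p Φ n) (p ^ n) := by
  induction n using Nat.strong_induction_on with
  | _ n ih =>
  have key := wittStructureInt_prop p Φ n
  conv_lhs at key => rw [wittPolynomial_eq_sum_C_mul_X_pow, sum_range_succ, Nat.sub_self,
    pow_zero, pow_one]
  simp only [map_add, map_sum, map_mul, map_pow, bind₁_X_right, bind₁_C_right] at key
  simp only [← C_pow] at key
  have hlead : IsWeightedHomogeneous (levelWeight p)
      (C ((p : ℤ) ^ n) * wittStructureInt p Φ n) (p ^ n) := by
    rw [eq_sub_of_add_eq' key]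
    refine (hΦ n).sub (IsWeightedHomogeneous.sum _ _ _ fun i hi => ?_)
    have hi : i < n := mem_range.mp hi
    have := ((ih i hi).pow (p ^ (n - i))).C_mul ((p : ℤ) ^ i)
    rwa [smul_eq_mul, ← pow_add, Nat.sub_add_cancel hi.le] at this
  intro m hm
  refine hlead ?_
  rw [coeff_C_mul]
  exact mul_ne_zero (pow_ne_zero _ (mod_cast (Fact.out : p.Prime).ne_zero)) hm

lemma isWeightedHomogeneous_wittAdd (n : ℕ) :
    IsWeightedHomogeneous (levelWeight p) (wittAdd p n) (p ^ n) :=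
  isWeightedHomogeneous_wittStructureInt p _ (fun k => by
    simpa only [map_add, bind₁_X_right] using
      (isWeightedHomogeneous_rename_wittPolynomial p 0 k).add
        (isWeightedHomogeneous_rename_wittPolynomial p 1 k)) n

lemma isWeightedHomogeneous_wittSub (n : ℕ) :
    IsWeightedHomogeneous (levelWeight p) (wittSub p n) (p ^ n) :=
  isWeightedHomogeneous_wittStructureInt p _ (fun k => by
    simpa only [map_sub, bind₁_X_right] using
      (isWeightedHomogeneous_rename_wittPolynomial p 0 k).sub
        (isWeightedHomogeneous_rename_wittPolynomial p 1 k)) n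

variable {p}

lemma snd_le_of_weight_eq_pow {ι : Type*} {d : ι × ℕ →₀ ℕ} {n : ℕ}
    (hd : Finsupp.weight (levelWeight p) d = p ^ n) {v : ι × ℕ} (hv : v ∈ d.support) :
    v.2 ≤ n := by
  rw [Finsupp.weight_apply, Finsupp.sum] at hd
  refine (Nat.pow_le_pow_iff_right (Fact.out : p.Prime).one_lt).mp (hd ▸ ?_)
  calc p ^ v.2 ≤ d v • levelWeight p v :=
        Nat.le_mul_of_pos_left _ (Nat.pos_of_ne_zero (Finsupp.mem_support_iff.mp hv))
    _ ≤ _ := Finset.single_le_sum (f := fun v => d v • levelWeight p v)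
          (fun _ _ => Nat.zero_le _) hv

end Isobaric

section Truncation

variable {p : ℕ} [Fact p.Prime] {A : Type*} [CommRing A]

lemma truncate_eq_truncate_iff {N : ℕ} {x y : WittVector p A} :
    truncate N x = truncate N y ↔ ∀ i < N, x.coeff i = y.coeff i := by
  refine ⟨fun h i hi => ?_, fun h => TruncatedWittVector.ext fun i => ?_⟩
  · rw [← coeff_truncate x ⟨i, hi⟩, ← coeff_truncate y ⟨i, hi⟩, h]
  · rw [coeff_truncate, coeff_truncate, h i i.2]

lemma coeff_iterate_verschiebung_teichmuller (z : A) (k j : ℕ) :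
    (verschiebung^[k] (teichmuller p z)).coeff j = if j = k then z else 0 := by
  obtain hjk | rfl | hkj := lt_trichotomy j k
  · rw [iterate_verschiebung_coeff_eq_zero _ hjk, if_neg hjk.ne]
  · simpa using iterate_verschiebung_coeff (teichmuller p z) j 0
  · obtain ⟨m, rfl⟩ := Nat.exists_eq_add_of_lt hkj
    rw [add_assoc, add_comm, iterate_verschiebung_coeff, if_neg (by omega)]
    exact teichmuller_coeff_pos p z _ (by omega)

lemma coeff_sum_iterate_verschiebung_teichmuller (x : WittVector p A) (N j : ℕ) :
    (∑ i ∈ range N, verschiebung^[i] (teichmuller p (x.coeff i))).coeff j =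
      if j < N then x.coeff j else 0 := by
  induction N generalizing j with
  | zero => simp
  | succ N ih =>
    rw [sum_range_succ, coeff_add_of_disjoint, ih, coeff_iterate_verschiebung_teichmuller]
    · split_ifs <;> first | omega | simp_all
    · intro m
      by_cases hm : m < N
      · exact .inr (by rw [coeff_iterate_verschiebung_teichmuller, if_neg hm.ne])
      · exact .inl (by rw [ih, if_neg hm])

lemma truncate_sum_iterate_verschiebung_teichmuller (x : WittVector p A) (N : ℕ) :
    truncate N (∑ i ∈ range N, verschiebung^[i] (teichmuller p (x.coeff i))) = truncate N x :=
  truncate_eq_truncate_iff.mpr fun j hj => by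
    rw [coeff_sum_iterate_verschiebung_teichmuller, if_pos hj]

variable [CharP A p]

lemma iterate_frobenius_teichmuller (z : A) (j : ℕ) :
    frobenius^[j] (teichmuller p z) = teichmuller p (z ^ p ^ j) := by
  ext (_ | k)
  · rw [iterate_frobenius_coeff, teichmuller_coeff_zero, teichmuller_coeff_zero]
  · rw [iterate_frobenius_coeff, teichmuller_coeff_pos p _ _ k.succ_pos,
      teichmuller_coeff_pos p _ _ k.succ_pos, zero_pow (pow_ne_zero _ (Fact.out : p.Prime).ne_zero)]

lemma iterate_verschiebung_teichmuller_mul (a b : A) (i j : ℕ) :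
    verschiebung^[i] (teichmuller p a) * verschiebung^[j] (teichmuller p b) =
      verschiebung^[i + j] (teichmuller p (a ^ p ^ j * b ^ p ^ i)) := by
  rw [iterate_verschiebung_mul, iterate_frobenius_teichmuller, iterate_frobenius_teichmuller,
    ← map_mul]

lemma exists_pow_eq_iterate_verschiebung {η : WittVector p A} (h0 : η.coeff 0 = 0) (k : ℕ) :
    ∃ w, η ^ k = verschiebung^[k] w := by
  obtain ⟨s, rfl⟩ : ∃ s, η = verschiebung^[1] s :=
    ⟨_, eq_iterate_verschiebung fun i hi => by rwa [Nat.lt_one_iff.mp hi]⟩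
  induction k with
  | zero => exact ⟨1, by simp⟩
  | succ k ih =>
    obtain ⟨w, hw⟩ := ih
    exact ⟨_, by rw [pow_succ, hw, iterate_verschiebung_mul]⟩

lemma truncate_pow_eq_zero {η : WittVector p A} (h0 : η.coeff 0 = 0) {N k : ℕ} (hNk : N ≤ k) :
    truncate N (η ^ k) = 0 := by
  obtain ⟨w, hw⟩ := exists_pow_eq_iterate_verschiebung h0 k
  refine RingHom.mem_ker.mp ((mem_ker_truncate N _).mpr fun i hi => ?_)
  rw [hw, iterate_verschiebung_coeff_eq_zero _ (hi.trans_le hNk)]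

end Truncation

section GaussBall

variable {p : ℕ} {A : Type*} {ν : A → EReal}

def gaussBound (p : ℕ) (ε C : ℝ) (n : ℕ) : ℝ := -(C + n) * (p : ℝ) ^ n / ε

/-- The ball `γ_ε(x) ≥ -C`, written coefficientwise (see `mem_gaussBall_iff`). -/
def gaussBall (p : ℕ) (ν : A → EReal) (ε C : ℝ) : Set (WittVector p A) :=
  {x | ∀ n, (gaussBound p ε C n : EReal) ≤ ν (x.coeff n)}

lemma gaussBall_mono {ε ε' C C' : ℝ} (hε' : 0 < ε') (hεε' : ε' ≤ ε) (hC : 0 ≤ C)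
    (hCC' : C ≤ C') : gaussBall p ν ε C ⊆ gaussBall p ν ε' C' := by
  intro x hx n
  refine le_trans (EReal.coe_le_coe_iff.mpr ?_) (hx n)
  simp only [gaussBound, neg_mul, neg_div, neg_le_neg_iff]
  exact div_le_div₀ (mul_nonneg (by linarith) (by positivity)) (by gcongr) hε' hεε'

variable [CommRing A]

lemma mem_gaussBall_zero_of_coeff_zero_eq_one (hν : IsPseudovaluation ν) {ε C : ℝ} (hε : 0 < ε)
    (hC : 0 ≤ C) {x : WittVector p A} (h0 : x.coeff 0 = 1) (hx : x ∈ gaussBall p ν ε C) :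
    x ∈ gaussBall p ν (ε / (1 + C)) 0
  | 0 => by simp [h0, hν.map_one, gaussBound]
  | n + 1 => by
    refine le_trans (EReal.coe_le_coe_iff.mpr ?_) (hx (n + 1))
    rw [gaussBound, gaussBound, div_div_eq_mul_div, div_le_div_iff_of_pos_right hε]
    push_cast
    nlinarith [mul_nonneg (mul_nonneg n.cast_nonneg hC) (pow_nonneg (Nat.cast_nonneg p) (n + 1))]

variable [Fact p.Prime]

lemma mem_gaussBall_iff {ε C : ℝ} (hε : 0 < ε) {x : WittVector p A} :
    x ∈ gaussBall p ν ε C ↔ ((-C : ℝ) : EReal) ≤ gaussNorm p ν ε x := by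
  refine (le_iInf_iff.trans (forall_congr' fun i => ?_)).symm
  have hp : (0 : ℝ) < p := mod_cast (Fact.out : p.Prime).pos
  have hc : 0 < ε * (p : ℝ) ^ (-(i : ℤ)) := by positivity
  have h : -C = i + ε * (p : ℝ) ^ (-(i : ℤ)) * gaussBound p ε C i := by
    rw [gaussBound, zpow_neg, zpow_natCast]
    field_simp
    ring
  rw [h, EReal.coe_natCast_add_mul_le_iff hc]

lemma isOverconvergent_iff {x : WittVector p A} :
    IsOverconvergent p ν x ↔ ∃ ε > 0, ∃ C ≥ 0, x ∈ gaussBall p ν ε C := by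
  constructor
  · rintro ⟨ε, hε, hγ⟩
    refine ⟨ε, hε, -min (gaussNorm p ν ε x).toReal 0, neg_nonneg.mpr (min_le_right _ _), ?_⟩
    rw [mem_gaussBall_iff hε, neg_neg]
    exact (EReal.coe_le_coe_iff.mpr (min_le_left _ _)).trans (EReal.coe_toReal_le hγ)
  · rintro ⟨ε, hε, C, -, hx⟩
    exact ⟨ε, hε, ne_bot_of_le_ne_bot (EReal.coe_ne_bot _) ((mem_gaussBall_iff hε).mp hx)⟩

section Pseudovaluation

variable (hν : IsPseudovaluation ν)
include hν

lemma zero_mem_gaussBall (ε C : ℝ) : (0 : WittVector p A) ∈ gaussBall p ν ε C := fun n => by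
  simp [hν.map_zero]

lemma one_mem_gaussBall {ε C : ℝ} (hε : 0 < ε) (hC : 0 ≤ C) :
    (1 : WittVector p A) ∈ gaussBall p ν ε C
  | 0 => by
    rw [one_coeff_zero, hν.map_one, EReal.coe_nonpos, gaussBound]
    simp only [pow_zero, mul_one, neg_div, neg_nonpos]
    positivity
  | n + 1 => by simp [hν.map_zero]

lemma iterate_verschiebung_teichmuller_mem_gaussBall {ε C : ℝ} {k : ℕ} {z : A}
    (hz : (gaussBound p ε C k : EReal) ≤ ν z) :
    verschiebung^[k] (teichmuller p z) ∈ gaussBall p ν ε C := fun n => by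
  rw [coeff_iterate_verschiebung_teichmuller]
  split_ifs with h
  · exact h ▸ hz
  · simp [hν.map_zero]

variable (hproper : ∀ a : A, ν a ≠ ⊥)
include hproper

lemma gaussBound_le_peval {ε C : ℝ} (hε : 0 < ε) {k n : ℕ} {φ : MvPolynomial (Fin k × ℕ) ℤ}
    (hφ : IsWeightedHomogeneous (levelWeight p) φ (p ^ n)) {x : Fin k → ℕ → A}
    (hx : ∀ i j, (gaussBound p ε C j : EReal) ≤ ν (x i j)) :
    (gaussBound p ε C n : EReal) ≤ ν (peval φ x) := by
  rw [peval, aeval_def, eval₂_eq]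
  refine hν.le_sum _ _ fun d hd => ?_
  rw [eq_intCast (algebraMap ℤ A)]
  refine hν.le_intCast_mul hproper _ ?_
  have hprod := hν.sum_le_prod_pow hproper d.support (Function.uncurry x)
    (fun v => gaussBound p ε C v.2) (fun v _ => hx v.1 v.2) d
  refine le_trans ?_ hprod
  have hweight := hφ (mem_support_iff.mp hd)
  have hweight' : (p : ℝ) ^ n = ∑ v ∈ d.support, (d v : ℝ) * (p : ℝ) ^ v.2 := by
    rw [Finsupp.weight_apply, Finsupp.sum] at hweight
    exact_mod_cast hweight.symm
  rw [EReal.coe_le_coe_iff]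
  calc gaussBound p ε C n = ∑ v ∈ d.support, (d v : ℝ) * (-(C + n) * (p : ℝ) ^ v.2 / ε) := by
        rw [gaussBound, hweight', Finset.mul_sum, Finset.sum_div]
        exact Finset.sum_congr rfl fun v _ => by ring
    _ ≤ ∑ v ∈ d.support, (d v : ℝ) * gaussBound p ε C v.2 := by
        refine Finset.sum_le_sum fun v hv => mul_le_mul_of_nonneg_left ?_ (Nat.cast_nonneg _)
        have hvn : (v.2 : ℝ) ≤ n := by exact_mod_cast snd_le_of_weight_eq_pow hweight hv
        rw [gaussBound]
        gcongr

lemma add_mem_gaussBall {ε C : ℝ} (hε : 0 < ε) {x y : WittVector p A}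
    (hx : x ∈ gaussBall p ν ε C) (hy : y ∈ gaussBall p ν ε C) : x + y ∈ gaussBall p ν ε C :=
  fun n => by
    rw [add_coeff]
    exact gaussBound_le_peval hν hproper hε (isWeightedHomogeneous_wittAdd p n)
      (Fin.forall_fin_two.mpr ⟨hx, hy⟩)

lemma sub_mem_gaussBall {ε C : ℝ} (hε : 0 < ε) {x y : WittVector p A}
    (hx : x ∈ gaussBall p ν ε C) (hy : y ∈ gaussBall p ν ε C) : x - y ∈ gaussBall p ν ε C :=
  fun n => by
    rw [sub_coeff]
    exact gaussBound_le_peval hν hproper hε (isWeightedHomogeneous_wittSub p n)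
      (Fin.forall_fin_two.mpr ⟨hx, hy⟩)

lemma sum_mem_gaussBall {ε C : ℝ} (hε : 0 < ε) {ι : Type*} (s : Finset ι)
    {x : ι → WittVector p A} (hx : ∀ i ∈ s, x i ∈ gaussBall p ν ε C) :
    ∑ i ∈ s, x i ∈ gaussBall p ν ε C := by
  induction s using Finset.induction_on with
  | empty => exact zero_mem_gaussBall hν ε C
  | insert i s hi ih =>
    rw [Finset.sum_insert hi]
    exact add_mem_gaussBall hν hproper hε (hx i (mem_insert_self i s))
      (ih fun j hj => hx j (mem_insert_of_mem hj))

variable [CharP A p]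

lemma mul_mem_gaussBall {ε C D : ℝ} (hε : 0 < ε) {x y : WittVector p A}
    (hx : x ∈ gaussBall p ν ε C) (hy : y ∈ gaussBall p ν ε D) :
    x * y ∈ gaussBall p ν ε (C + D) := fun n => by
  have hxy : (x * y).coeff n =
      ((∑ i ∈ range (n + 1), verschiebung^[i] (teichmuller p (x.coeff i))) *
        ∑ j ∈ range (n + 1), verschiebung^[j] (teichmuller p (y.coeff j))).coeff n := by
    refine truncate_eq_truncate_iff.mp ?_ n n.lt_succ_self
    rw [map_mul, map_mul, truncate_sum_iterate_verschiebung_teichmuller,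
      truncate_sum_iterate_verschiebung_teichmuller]
  rw [hxy, Finset.sum_mul_sum]
  refine sum_mem_gaussBall hν hproper hε _ (fun i _ =>
    sum_mem_gaussBall hν hproper hε _ fun j _ => ?_) n
  rw [iterate_verschiebung_teichmuller_mul]
  refine iterate_verschiebung_teichmuller_mem_gaussBall hν ?_
  have hp : (p : ℝ) ≠ 0 := mod_cast (Fact.out : p.Prime).ne_zero
  have := hν.add_le_mul_of_le hproper (hν.nsmul_le_pow hproper (hx i) (p ^ j))
    (hν.nsmul_le_pow hproper (hy j) (p ^ i))
  convert this using 1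
  rw [← EReal.coe_add, EReal.coe_eq_coe_iff, gaussBound, gaussBound, gaussBound]
  push_cast
  field_simp
  ring

lemma pow_mem_gaussBall {ε : ℝ} (hε : 0 < ε) {x : WittVector p A}
    (hx : x ∈ gaussBall p ν ε 0) (k : ℕ) : x ^ k ∈ gaussBall p ν ε 0 := by
  induction k with
  | zero => simpa using one_mem_gaussBall hν hε le_rfl
  | succ k ih => simpa [pow_succ] using mul_mem_gaussBall hν hproper hε ih hx

lemma exists_mul_eq_one_mem_gaussBall {ε : ℝ} (hε : 0 < ε) {x : WittVector p A}
    (h0 : x.coeff 0 = 1) (hx : x ∈ gaussBall p ν ε 0) :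
    ∃ y, x * y = 1 ∧ y ∈ gaussBall p ν ε 0 := by
  set η := 1 - x with hη
  have hη0 : η.coeff 0 = 0 := by
    have := add_coeff_zero x η
    rwa [add_sub_cancel, one_coeff_zero, h0, left_eq_add] at this
  have hstable : ∀ n m, n ≤ m → truncate (n + 1) (∑ k ∈ range (m + 1), η ^ k) =
      truncate (n + 1) (∑ k ∈ range (n + 1), η ^ k) := by
    intro n m hnm
    induction hnm with
    | refl => rfl
    | @step m hnm ih =>
      rw [← ih, sum_range_succ _ (m + 1), map_add,
        truncate_pow_eq_zero hη0 (Nat.succ_le_succ hnm), add_zero]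
  set y := mk p fun n => (∑ k ∈ range (n + 1), η ^ k).coeff n
  have hy : ∀ n, truncate (n + 1) y = truncate (n + 1) (∑ k ∈ range (n + 1), η ^ k) := fun n =>
    truncate_eq_truncate_iff.mpr fun j hj =>
      truncate_eq_truncate_iff.mp (hstable j n (by omega)).symm j j.lt_succ_self
  refine ⟨y, ext fun n => truncate_eq_truncate_iff.mp ?_ n n.lt_succ_self, fun n => ?_⟩
  · rw [map_mul, hy, ← map_mul, ← sub_sub_cancel 1 x, ← hη, mul_neg_geom_sum, map_sub,
      truncate_pow_eq_zero hη0 le_rfl, sub_zero]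
  · have hηmem : η ∈ gaussBall p ν ε 0 :=
      sub_mem_gaussBall hν hproper hε (one_mem_gaussBall hν hε le_rfl) hx
    exact sum_mem_gaussBall hν hproper hε _ (fun k _ => pow_mem_gaussBall hν hproper hε hηmem k) n

end Pseudovaluation

end GaussBall

section Overconvergent

variable {p : ℕ} [Fact p.Prime] {A : Type*} [CommRing A] {ν : A → EReal}

lemma isOverconvergent_teichmuller (hν : IsPseudovaluation ν) {z : A} (hz : ν z ≠ ⊥) :
    IsOverconvergent p ν (teichmuller p z) := by
  refine isOverconvergent_iff.mpr ⟨1, one_pos, -min (ν z).toReal 0,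
    neg_nonneg.mpr (min_le_right _ _), ?_⟩
  simpa using iterate_verschiebung_teichmuller_mem_gaussBall (k := 0) hν
    ((EReal.coe_le_coe_iff.mpr (by simp [gaussBound])).trans (EReal.coe_toReal_le hz))

variable [CharP A p] (hν : IsPseudovaluation ν) (hproper : ∀ a : A, ν a ≠ ⊥)
include hν hproper

lemma IsOverconvergent.mul {x y : WittVector p A} (hx : IsOverconvergent p ν x)
    (hy : IsOverconvergent p ν y) : IsOverconvergent p ν (x * y) := by
  obtain ⟨ε, hε, C, hC, hxC⟩ := isOverconvergent_iff.mp hx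
  obtain ⟨ε', hε', D, hD, hyD⟩ := isOverconvergent_iff.mp hy
  have hmin : 0 < min ε ε' := lt_min hε hε'
  exact isOverconvergent_iff.mpr ⟨min ε ε', hmin, C + D, add_nonneg hC hD,
    mul_mem_gaussBall hν hproper hmin
      (gaussBall_mono hmin (min_le_left _ _) hC le_rfl hxC)
      (gaussBall_mono hmin (min_le_right _ _) hD le_rfl hyD)⟩

lemma IsOverconvergent.exists_mul_eq_one {x : WittVector p A} (hx : IsOverconvergent p ν x)
    (h0 : x.coeff 0 = 1) : ∃ y, x * y = 1 ∧ IsOverconvergent p ν y := by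
  obtain ⟨ε, hε, C, hC, hxC⟩ := isOverconvergent_iff.mp hx
  have hε' : 0 < ε / (1 + C) := by positivity
  obtain ⟨y, hxy, hy⟩ := exists_mul_eq_one_mem_gaussBall hν hproper hε' h0
    (mem_gaussBall_zero_of_coeff_zero_eq_one hν hε hC h0 hxC)
  exact ⟨y, hxy, isOverconvergent_iff.mpr ⟨_, hε', 0, le_rfl, hy⟩⟩

end Overconvergent

end WittVector

/-- An overconvergent Witt vector `α` has an overconvergent inverse iff
its zeroth Witt component `a₀` is a unit in `A`. -/
theorem statement17 (p : ℕ) [Fact p.Prime] (A : Type*) [CommRing A]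
    (hpA : ((p : ℕ) : A) = 0)
    (ν : A → EReal) (hν : IsPseudovaluation ν) (hproper : ∀ a : A, ν a ≠ ⊥)
    (α : WittVector p A) (hα : IsOverconvergent p ν α) :
    (∃ β : WittVector p A, α * β = 1 ∧ IsOverconvergent p ν β) ↔
      IsUnit (α.coeff 0) := by
  constructor
  · rintro ⟨β, hαβ, -⟩
    exact IsUnit.of_mul_eq_one (β.coeff 0) (by rw [← mul_coeff_zero, hαβ, one_coeff_zero])
  · intro hu
    cases subsingleton_or_nontrivial A
    · exact ⟨α, ext fun n => Subsingleton.elim _ _, hα⟩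
    have : CharP A p := (CharP.charP_iff_prime_eq_zero Fact.out).mpr hpA
    obtain ⟨u, hu⟩ := isUnit_iff_exists_inv'.mp hu
    have hτ := isOverconvergent_teichmuller (p := p) hν (hproper u)
    obtain ⟨β, hβ, hβoc⟩ := (hτ.mul hν hproper hα).exists_mul_eq_one hν hproper
      (by rw [mul_coeff_zero, teichmuller_coeff_zero, hu])
    exact ⟨teichmuller p u * β, by rw [← hβ]; ring, hτ.mul hν hproper hβoc⟩
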